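/- Let K ⊆ L be a purely inseparable algebraic field extension and let A be a commutative K-algebra. Then the canonical map Spec(A ⊗_K L) → Spec(A) induced by A → A ⊗_K L is a homeomorphism of topological spaces (in particular it is a bijection on prime ideals). -/

import Mathlib

open TensorProduct

theorem primeSpectrum_comap_isHomeomorph_of_purelyInseparable_general
    (K L : Type*) [Field K] [Field L] [Algebra K L]
    [IsPurelyInseparable K L]
    (A : Type*) [CommRing A] [Algebra K A] :
    IsHomeomorph (PrimeSpectrum.comap
      (Algebra.TensorProduct.includeLeftRingHom : A →+* A ⊗[K] L)) :=
  PrimeSpectrum.isHomeomorph_comap_of_isPurelyInseparable K L A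

/-- If `L/K` is a purely inseparable (algebraic) field extension and `A` is a commutative
`K`-algebra, then the canonical map `Spec (A ⊗[K] L) → Spec A` induced by `a ↦ a ⊗ 1`
is a homeomorphism. -/
theorem primeSpectrum_comap_isHomeomorph_of_purelyInseparable
    (K L : Type*) [Field K] [Field L] [Algebra K L] [Algebra.IsAlgebraic K L]
    [IsPurelyInseparable K L]
    (A : Type*) [CommRing A] [Algebra K A] :
    IsHomeomorph (PrimeSpectrum.comap
      (Algebra.TensorProduct.includeLeftRingHom : A →+* A ⊗[K] L)) :=
  primeSpectrum_comap_isHomeomorph_of_purelyInseparable_general K L A
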